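/- Let a > b > 0 and fix i ∈ ℕ. For z_1,…,z_i ≥ 0 with √n·z_ℓ ∈ ℕ_0, define L_n = Σ_{ℓ=1}^i √n·z_ℓ · Σ_{j=ℓ}^n log(1 − a·n^{−3/2} + b·n^{−1/2}·1_{\{j=1\}}). Then for any fixed nonnegative reals z_1,…,z_i (approximated by lattice values z_ℓ^{(n)} → z_ℓ with √n·z_ℓ^{(n)} ∈ ℕ_0), L_n → −a·Σ_{ℓ=1}^i z_ℓ + b·z_1 as n → ∞. -/

import Mathlib

open Filter Finset Topology

/-!
Write `x = √n`, so that `n^{3/2} = x³`. The inner sum over `j ∈ [ℓ, n]` consists of `n + 1 - ℓ`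
bulk terms `log (1 - a / x³)` and, when `ℓ = 1`, one boundary correction
`log (1 - a / x³ + b / x) - log (1 - a / x³)`. Since `y · log (1 + g y) → t` whenever
`y · g y → t`, the bulk gives `x · x² · log (1 - a / x³) → -a` and the correction gives
`x · (log (1 - a / x³ + b / x) - log (1 - a / x³)) → b - 0`; multiplying by `z_ℓ^{(n)} → z_ℓ`
and summing over `ℓ` yields `-a Σ z_ℓ + b z_1`.
-/

theorem Finset.sum_comp_add_ite_eq {ι M G : Type*} [DecidableEq ι] [AddZeroClass M]
    [AddCommGroup G] (s : Finset ι) (k : ι) (f : M → G) (x y : M) :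
    ∑ j ∈ s, f (x + if j = k then y else 0) =
      #s • f x + if k ∈ s then f (x + y) - f x else 0 := by
  have hpoint : ∀ j, f (x + if j = k then y else 0) =
      f x + if j = k then f (x + y) - f x else 0 := by
    intro j
    split_ifs <;> simp
  simp only [hpoint, sum_add_distrib, sum_const, sum_ite_eq']

theorem tendsto_natCast_card_Icc_div (ℓ : ℕ) :
    Tendsto (fun n : ℕ => (#(Icc ℓ n) : ℝ) / n) atTop (𝓝 1) := by
  have h : Tendsto (fun n : ℕ => 1 + (1 - (ℓ : ℝ)) / n) atTop (𝓝 (1 + 0)) :=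
    tendsto_const_nhds.add (tendsto_const_nhds.div_atTop tendsto_natCast_atTop_atTop)
  rw [add_zero] at h
  refine h.congr' ?_
  filter_upwards [eventually_ge_atTop (max 1 ℓ)] with n hn
  have hn0 : (n : ℝ) ≠ 0 := Nat.cast_ne_zero.2 (by omega)
  rw [Nat.card_Icc, Nat.cast_sub (by omega)]
  push_cast
  field_simp
  ring

namespace Real

theorem rpow_three_halves_eq_sqrt_pow {x : ℝ} (hx : 0 ≤ x) :
    x ^ ((3 : ℝ) / 2) = √x ^ 3 := by
  rw [sqrt_eq_rpow, ← rpow_mul_natCast hx]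
  norm_num

theorem tendsto_pow_three_mul_log_one_sub_div_pow_three (a : ℝ) :
    Tendsto (fun x : ℝ => x ^ 3 * log (1 - a / x ^ 3)) atTop (𝓝 (-a)) := by
  have h := (tendsto_mul_log_one_add_div_atTop (-a)).comp
    (tendsto_pow_atTop (n := 3) (by norm_num))
  refine h.congr fun x => ?_
  simp [sub_eq_add_neg, neg_div]

theorem tendsto_mul_log_one_sub_div_pow_three_add_div (a b : ℝ) :
    Tendsto (fun x : ℝ => x * log (1 - a / x ^ 3 + b / x)) atTop (𝓝 b) := by
  have hg : Tendsto (fun x : ℝ => x * (b / x - a / x ^ 3)) atTop (𝓝 b) := by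
    have h : Tendsto (fun x : ℝ => b - a / x ^ 2) atTop (𝓝 (b - 0)) :=
      tendsto_const_nhds.sub
        (tendsto_const_nhds.div_atTop (tendsto_pow_atTop (by norm_num)))
    rw [sub_zero] at h
    refine h.congr' ?_
    filter_upwards [eventually_ne_atTop 0] with x hx
    field_simp
  refine (tendsto_mul_log_one_add_of_tendsto hg).congr fun x => ?_
  ring_nf

theorem tendsto_mul_log_one_sub_div_pow_three_add_div_sub (a b : ℝ) :
    Tendsto (fun x : ℝ => x * (log (1 - a / x ^ 3 + b / x) - log (1 - a / x ^ 3))) atTop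
      (𝓝 b) := by
  have h := (tendsto_mul_log_one_sub_div_pow_three_add_div a b).sub
    (tendsto_mul_log_one_sub_div_pow_three_add_div a 0)
  simpa [mul_sub] using h

end Real

theorem tendsto_sqrt_mul_sum_log_one_sub_add_ite (a b : ℝ) {ℓ : ℕ} (hℓ : 1 ≤ ℓ) :
    Tendsto (fun n : ℕ => √(n : ℝ) * ∑ j ∈ Icc ℓ n, Real.log
      (1 - a / (n : ℝ) ^ ((3 : ℝ) / 2) + if j = 1 then b / √(n : ℝ) else 0)) atTop
      (𝓝 (-a + if ℓ = 1 then b else 0)) := by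
  have hsqrt : Tendsto (fun n : ℕ => √(n : ℝ)) atTop atTop :=
    Real.tendsto_sqrt_atTop.comp tendsto_natCast_atTop_atTop
  have hbulk : Tendsto (fun n : ℕ => √(n : ℝ) * (#(Icc ℓ n) * Real.log (1 - a / √(n : ℝ) ^ 3)))
      atTop (𝓝 (-a)) := by
    have h := (tendsto_natCast_card_Icc_div ℓ).mul
      ((Real.tendsto_pow_three_mul_log_one_sub_div_pow_three a).comp hsqrt)
    rw [one_mul] at h
    refine h.congr' ?_
    filter_upwards [eventually_ge_atTop 1] with n hn
    have hn0 : (n : ℝ) ≠ 0 := Nat.cast_ne_zero.2 (by omega)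
    rw [Function.comp_apply, pow_succ, Real.sq_sqrt (Nat.cast_nonneg n)]
    field_simp
  have hboundary : Tendsto (fun n : ℕ => if 1 ∈ Icc ℓ n then √(n : ℝ) *
      (Real.log (1 - a / √(n : ℝ) ^ 3 + b / √(n : ℝ)) - Real.log (1 - a / √(n : ℝ) ^ 3))
      else 0) atTop (𝓝 (if ℓ = 1 then b else 0)) := by
    rcases eq_or_ne ℓ 1 with rfl | hne
    · refine ((Real.tendsto_mul_log_one_sub_div_pow_three_add_div_sub a b).comp hsqrt).congr' ?_
      filter_upwards [eventually_ge_atTop 1] with n hn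
      simp [hn]
    · have h1 : ∀ n, 1 ∉ Icc ℓ n := fun n => by simp only [mem_Icc]; omega
      simp [h1, hne]
  refine (hbulk.add hboundary).congr fun n => ?_
  rw [Real.rpow_three_halves_eq_sqrt_pow (Nat.cast_nonneg n), Finset.sum_comp_add_ite_eq,
    nsmul_eq_mul, mul_add, mul_ite, mul_zero]

theorem log_tail_limit
    (a b : ℝ) (i : ℕ) (hi : 1 ≤ i)
    (z : ℕ → ℝ)
    (zn : ℕ → ℕ → ℝ)
    (happrox : ∀ ℓ ∈ Icc 1 i, Tendsto (fun n => zn n ℓ) atTop (nhds (z ℓ))) :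
    Tendsto
      (fun n : ℕ => ∑ ℓ ∈ Icc 1 i, Real.sqrt n * zn n ℓ *
        ∑ j ∈ Icc ℓ n, Real.log
          (1 - a / (n : ℝ) ^ ((3 : ℝ) / 2) + if j = 1 then b / Real.sqrt n else 0))
      atTop
      (nhds (-a * ∑ ℓ ∈ Icc 1 i, z ℓ + b * z 1)) := by
  have hterm : ∀ ℓ ∈ Icc 1 i, Tendsto (fun n : ℕ => Real.sqrt n * zn n ℓ *
      ∑ j ∈ Icc ℓ n, Real.log
        (1 - a / (n : ℝ) ^ ((3 : ℝ) / 2) + if j = 1 then b / Real.sqrt n else 0))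
      atTop (𝓝 (z ℓ * (-a + if ℓ = 1 then b else 0))) := fun ℓ hℓ =>
    ((happrox ℓ hℓ).mul (tendsto_sqrt_mul_sum_log_one_sub_add_ite a b (mem_Icc.1 hℓ).1)).congr
      fun n => by ring
  have hlimit : ∑ ℓ ∈ Icc 1 i, z ℓ * (-a + if ℓ = 1 then b else 0) =
      -a * ∑ ℓ ∈ Icc 1 i, z ℓ + b * z 1 := by
    simp only [mul_add, sum_add_distrib, mul_ite, mul_zero, sum_ite_eq',
      if_pos (left_mem_Icc.2 hi), ← sum_mul]
    ring
  exact hlimit ▸ tendsto_finsetSum _ hterm
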